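/- arXiv:math/9910112 — 2 statements merged into one kernel-verified Lean document; each statement's English description precedes it below -/
import Mathlib

section
/- A Hermitian matrix A ∈ M_n(C), C = R(i) with R an ordered ring containing 1/2, satisfies ω(A) ≥ 0 for every positive linear functional ω on M_n(C) if and only if ⟨v, Av⟩ ≥ 0 for all v ∈ Cⁿ. -/
/-- The ring `C = R(i)` over an ordered ring `R`, axiomatized through its conjugation
`z ↦ z̄`, its imaginary unit `i` (with `i² = -1`), the fact that every element is of the
form `a + i b` with `a, b` real (i.e. conjugation-fixed), and the positive cone `P ⊆ R`
making `R = -P ∪ {0} ∪ P` a disjoint union with `P` closed under `+` and `·`. -/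
structure OrderedScalars (C : Type*) [CommRing C] where
  /-- complex conjugation -/
  conj : C →+* C
  conj_conj : ∀ z : C, conj (conj z) = z
  /-- the imaginary unit -/
  i : C
  i_mul_i : i * i = -1
  conj_i : conj i = -i
  /-- every element is `a + i b` with `a`, `b` real -/
  exists_re_im : ∀ z : C, ∃ a b : C, conj a = a ∧ conj b = b ∧ z = a + i * b
  /-- the positive cone of the ordered ring `R = {z | conj z = z}` -/
  P : Set C
  P_real : ∀ a ∈ P, conj a = a
  P_add : ∀ a ∈ P, ∀ b ∈ P, a + b ∈ P
  P_mul : ∀ a ∈ P, ∀ b ∈ P, a * b ∈ P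
  P_ne_zero : ∀ a ∈ P, a ≠ 0
  P_asymm : ∀ a ∈ P, -a ∉ P
  P_total : ∀ a : C, conj a = a → a ≠ 0 → a ∈ P ∨ -a ∈ P

/-- `a ≥ 0` in `R ⊆ C`. -/
def OrderedScalars.nonneg {C : Type*} [CommRing C] (S : OrderedScalars C) (a : C) : Prop :=
  a ∈ S.P ∨ a = 0


/-- The conjugate-transpose involution on `Mₙ(C)`. -/
def ctrans {C : Type*} [CommRing C] (S : OrderedScalars C) {n : ℕ}
    (M : Matrix (Fin n) (Fin n) C) : Matrix (Fin n) (Fin n) C :=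
  fun i j => S.conj (M j i)

set_option linter.unusedSectionVars false
section Scalars
variable {C : Type*} [CommRing C] (S : OrderedScalars C)

lemma OS.nonneg_zero : S.nonneg 0 := Or.inr rfl

lemma OS.real_of_nonneg {a : C} (ha : S.nonneg a) : S.conj a = a := by
  rcases ha with ha | rfl
  · exact S.P_real a ha
  · exact map_zero _

lemma OS.nonneg_add {a b : C} (ha : S.nonneg a) (hb : S.nonneg b) : S.nonneg (a + b) := by
  rcases ha with ha | rfl <;> rcases hb with hb | rfl
  · exact Or.inl (S.P_add a ha b hb)
  · simpa [OrderedScalars.nonneg] using Or.inl ha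
  · simpa [OrderedScalars.nonneg] using Or.inl hb
  · simp [OrderedScalars.nonneg]

lemma OS.nonneg_mul {a b : C} (ha : S.nonneg a) (hb : S.nonneg b) : S.nonneg (a * b) := by
  rcases ha with ha | rfl <;> rcases hb with hb | rfl
  · exact Or.inl (S.P_mul a ha b hb)
  · simp [OrderedScalars.nonneg]
  · simp [OrderedScalars.nonneg]
  · simp [OrderedScalars.nonneg]

lemma OS.sq_nonneg {a : C} (ha : S.conj a = a) : S.nonneg (a * a) := by
  by_cases h0 : a = 0
  · simp [h0, OrderedScalars.nonneg]
  rcases S.P_total a ha h0 with hp | hp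
  · exact Or.inl (S.P_mul a hp a hp)
  · have := S.P_mul (-a) hp (-a) hp
    simpa [OrderedScalars.nonneg] using Or.inl this

lemma OS.sq_eq_zero {a : C} (ha : S.conj a = a) (h : a * a = 0) : a = 0 := by
  by_contra h0
  rcases S.P_total a ha h0 with hp | hp
  · exact S.P_ne_zero _ (S.P_mul a hp a hp) h
  · exact S.P_ne_zero _ (S.P_mul (-a) hp (-a) hp) (by simpa using h)

lemma OS.nonneg_antisymm {a : C} (ha : S.nonneg a) (hb : S.nonneg (-a)) : a = 0 := by
  rcases ha with ha | rfl
  · rcases hb with hb | hb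
    · exact absurd hb (S.P_asymm a ha)
    · simpa using hb
  · rfl

lemma OS.normSq_nonneg (z : C) : S.nonneg (S.conj z * z) := by
  obtain ⟨a, b, ha, hb, rfl⟩ := S.exists_re_im z
  have hc : S.conj (a + S.i * b) = a - S.i * b := by
    rw [map_add, map_mul, S.conj_i, ha, hb]; ring
  have : S.conj (a + S.i * b) * (a + S.i * b) = a * a + b * b := by
    rw [hc]
    linear_combination (-(b*b)) * S.i_mul_i
  rw [this]
  exact OS.nonneg_add S (OS.sq_nonneg S ha) (OS.sq_nonneg S hb)

lemma OS.normSq_real (z : C) : S.conj (S.conj z * z) = S.conj z * z := 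
  OS.real_of_nonneg S (OS.normSq_nonneg S z)

lemma OS.normSq_eq_zero {z : C} (h : S.conj z * z = 0) : z = 0 := by
  obtain ⟨a, b, ha, hb, rfl⟩ := S.exists_re_im z
  have hc : S.conj (a + S.i * b) = a - S.i * b := by
    rw [map_add, map_mul, S.conj_i, ha, hb]; ring
  have hsum : a * a + b * b = 0 := by
    rw [hc] at h; linear_combination h + (b*b) * S.i_mul_i
  have ha2 : a * a = 0 := by
    refine OS.nonneg_antisymm S (OS.sq_nonneg S ha) ?_
    have : -(a*a) = b*b := by linear_combination -hsum
    rw [this]; exact OS.sq_nonneg S hb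
  have hb2 : b * b = 0 := by
    have : b * b = -(a*a) := by linear_combination hsum
    simp [this, ha2]
  rw [OS.sq_eq_zero S ha ha2, OS.sq_eq_zero S hb hb2]
  ring

variable [Nontrivial C]

lemma OS.one_mem : (1 : C) ∈ S.P := by
  rcases S.P_total 1 (map_one _) one_ne_zero with hp | hp
  · exact hp
  · have := S.P_mul _ hp _ hp
    simp at this
    exact this

lemma OS.add_one_mem {a : C} (ha : S.nonneg a) : a + 1 ∈ S.P := by
  rcases ha with ha | rfl
  · exact S.P_add a ha 1 (OS.one_mem S)
  · simpa using OS.one_mem S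

lemma OS.cancel {a x : C} (ha : a ∈ S.P) (hx : S.conj x = x) (hax : S.nonneg (a * x)) :
    S.nonneg x := by
  by_contra hnx
  have hx0 : x ≠ 0 := fun h0 => hnx (Or.inr h0)
  have hxP : -x ∈ S.P := by
    rcases S.P_total x hx hx0 with hp | hp
    · exact absurd (Or.inl hp) hnx
    · exact hp
  have hmem : a * (-x) ∈ S.P := S.P_mul a ha _ hxP
  rcases hax with hp | hp
  · exact S.P_asymm _ hp (by simpa [neg_mul, mul_neg] using hmem)
  · exact S.P_ne_zero _ hmem (by rw [mul_neg, hp, neg_zero])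

lemma OS.mul_eq_zero_of {a x : C} (ha : a ∈ S.P) (hx : S.nonneg x) (hax : a * x = 0) :
    x = 0 := by
  rcases hx with hp | hp
  · exact absurd hax (S.P_ne_zero _ (S.P_mul a ha x hp))
  · exact hp

lemma OS.four_cancel {h x y : C} (h_half : h + h = 1) 
    (hxy : x + x + x + x = y + y + y + y) : x = y := by
  have e1 : x * ((h + h) * (h + h)) = (x + x + x + x) * (h * h) := by ring
  have e2 : y * ((h + h) * (h + h)) = (y + y + y + y) * (h * h) := by ring
  rw [h_half] at e1 e2
  simp at e1 e2
  rw [e1, e2, hxy]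

end Scalars

section MatrixLemmas
set_option linter.unusedSectionVars false
variable {C : Type*} [CommRing C] (S : OrderedScalars C) {n : ℕ}

/-- the sesquilinear form `⟨x, A y⟩`. -/
def ip (A : Matrix (Fin n) (Fin n) C) (x y : Fin n → C) : C :=
  ∑ i, ∑ j, S.conj (x i) * A i j * y j

lemma ip_q_eq (A : Matrix (Fin n) (Fin n) C) (v : Fin n → C) :
    ∑ k, S.conj (v k) * A.mulVec v k = ip S A v v := by
  unfold ip Matrix.mulVec dotProduct
  refine Finset.sum_congr rfl fun i _ => ?_
  rw [Finset.mul_sum]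
  refine Finset.sum_congr rfl fun j _ => by ring

lemma ctrans_apply (A : Matrix (Fin n) (Fin n) C) (hA : ctrans S A = A) (i j : Fin n) :
    S.conj (A i j) = A j i := congrFun (congrFun hA j) i

lemma ip_conj (A : Matrix (Fin n) (Fin n) C) (hA : ctrans S A = A) (x y : Fin n → C) :
    S.conj (ip S A x y) = ip S A y x := by
  unfold ip
  rw [map_sum, Finset.sum_comm]
  refine Finset.sum_congr rfl fun j _ => ?_
  rw [map_sum]
  refine Finset.sum_congr rfl fun i _ => ?_
  rw [map_mul, map_mul, S.conj_conj, ctrans_apply S A hA j i]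
  ring

lemma ip_add_left (A : Matrix (Fin n) (Fin n) C) (x x' y : Fin n → C) :
    ip S A (x + x') y = ip S A x y + ip S A x' y := by
  unfold ip
  rw [← Finset.sum_add_distrib]
  refine Finset.sum_congr rfl fun i _ => ?_
  rw [← Finset.sum_add_distrib]
  refine Finset.sum_congr rfl fun j _ => ?_
  simp [map_add]; ring

lemma ip_add_right (A : Matrix (Fin n) (Fin n) C) (x y y' : Fin n → C) :
    ip S A x (y + y') = ip S A x y + ip S A x y' := by
  unfold ip
  rw [← Finset.sum_add_distrib]
  refine Finset.sum_congr rfl fun i _ => ?_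
  rw [← Finset.sum_add_distrib]
  refine Finset.sum_congr rfl fun j _ => ?_
  simp; ring

lemma ip_sub_left (A : Matrix (Fin n) (Fin n) C) (x x' y : Fin n → C) :
    ip S A (x - x') y = ip S A x y - ip S A x' y := by
  unfold ip
  rw [← Finset.sum_sub_distrib]
  refine Finset.sum_congr rfl fun i _ => ?_
  rw [← Finset.sum_sub_distrib]
  refine Finset.sum_congr rfl fun j _ => ?_
  simp [map_sub]; ring

lemma ip_sub_right (A : Matrix (Fin n) (Fin n) C) (x y y' : Fin n → C) :
    ip S A x (y - y') = ip S A x y - ip S A x y' := by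
  unfold ip
  rw [← Finset.sum_sub_distrib]
  refine Finset.sum_congr rfl fun i _ => ?_
  rw [← Finset.sum_sub_distrib]
  refine Finset.sum_congr rfl fun j _ => ?_
  simp; ring

lemma ip_smul_left (A : Matrix (Fin n) (Fin n) C) (c : C) (x y : Fin n → C) :
    ip S A (c • x) y = S.conj c * ip S A x y := by
  unfold ip
  rw [Finset.mul_sum]
  refine Finset.sum_congr rfl fun i _ => ?_
  rw [Finset.mul_sum]
  refine Finset.sum_congr rfl fun j _ => ?_
  simp [map_mul]; ring

lemma ip_smul_right (A : Matrix (Fin n) (Fin n) C) (c : C) (x y : Fin n → C) :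
    ip S A x (c • y) = c * ip S A x y := by
  unfold ip
  rw [Finset.mul_sum]
  refine Finset.sum_congr rfl fun i _ => ?_
  rw [Finset.mul_sum]
  refine Finset.sum_congr rfl fun j _ => ?_
  simp; ring

lemma ip_single_left (A : Matrix (Fin n) (Fin n) C) (k : Fin n) (y : Fin n → C) :
    ip S A (Pi.single k 1) y = ∑ j, A k j * y j := by
  unfold ip
  rw [Finset.sum_comm]
  refine Finset.sum_congr rfl fun j _ => ?_
  rw [Finset.sum_eq_single k]
  · simp [Pi.single_apply]
  · intro b _ hb
    simp [Pi.single_apply, hb]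
  · simp

lemma ip_single_right (A : Matrix (Fin n) (Fin n) C) (k : Fin n) (x : Fin n → C) :
    ip S A x (Pi.single k 1) = ∑ i, S.conj (x i) * A i k := by
  unfold ip
  refine Finset.sum_congr rfl fun i _ => ?_
  rw [Finset.sum_eq_single k]
  · simp [Pi.single_apply]
  · intro b _ hb
    simp [Pi.single_apply, hb]
  · simp

lemma ip_single_single (A : Matrix (Fin n) (Fin n) C) (k l : Fin n) :
    ip S A (Pi.single k 1) (Pi.single l 1) = A k l := by
  rw [ip_single_left]
  rw [Finset.sum_eq_single l]
  · simp [Pi.single_apply]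
  · intro b _ hb
    simp [Pi.single_apply, hb]
  · simp

end MatrixLemmas

section Embedding
set_option linter.unusedSectionVars false
variable {C : Type*} [CommRing C] (S : OrderedScalars C) {n : ℕ}

/-- embed an `n × n` matrix into the lower-right corner of an `(n+1) × (n+1)` matrix. -/
def emb (M : Matrix (Fin n) (Fin n) C) : Matrix (Fin (n + 1)) (Fin (n + 1)) C :=
  Matrix.of fun i j =>
    Fin.cases 0 (fun i' => Fin.cases 0 (fun j' => M i' j') j) i

@[simp] lemma emb_zero_left (M : Matrix (Fin n) (Fin n) C) (j : Fin (n + 1)) :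
    emb M 0 j = 0 := rfl

@[simp] lemma emb_succ_zero (M : Matrix (Fin n) (Fin n) C) (i : Fin n) :
    emb M i.succ 0 = 0 := rfl

@[simp] lemma emb_succ_succ (M : Matrix (Fin n) (Fin n) C) (i j : Fin n) :
    emb M i.succ j.succ = M i j := rfl

@[simp] lemma emb_zero_right (M : Matrix (Fin n) (Fin n) C) (i : Fin (n + 1)) :
    emb M i 0 = 0 := by
  induction i using Fin.cases with
  | zero => rfl
  | succ i => rfl

lemma emb_mul (M N : Matrix (Fin n) (Fin n) C) : emb (M * N) = emb M * emb N := by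
  ext i j
  rw [Matrix.mul_apply]
  induction i using Fin.cases with
  | zero => simp
  | succ i =>
    induction j using Fin.cases with
    | zero => simp
    | succ j =>
      rw [Fin.sum_univ_succ]
      simp [Matrix.mul_apply]

lemma ctrans_emb (M : Matrix (Fin n) (Fin n) C) : ctrans S (emb M) = emb (ctrans S M) := by
  ext i j
  induction i using Fin.cases with
  | zero =>
    induction j using Fin.cases with
    | zero => simp [ctrans]
    | succ j => simp [ctrans]
  | succ i =>
    induction j using Fin.cases with
    | zero => simp [ctrans]
    | succ j => simp [ctrans]

/-- embedding as a linear map. -/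
def embL : Matrix (Fin n) (Fin n) C →ₗ[C] Matrix (Fin (n + 1)) (Fin (n + 1)) C where
  toFun := emb
  map_add' M N := by
    ext i j
    induction i using Fin.cases with
    | zero => simp
    | succ i =>
      induction j using Fin.cases with
      | zero => simp
      | succ j => simp
  map_smul' c M := by
    ext i j
    induction i using Fin.cases with
    | zero => simp
    | succ i =>
      induction j using Fin.cases with
      | zero => simp
      | succ j => simp

@[simp] lemma embL_apply (M : Matrix (Fin n) (Fin n) C) : embL M = emb M := rfl

/-- extend a vector by `0` in position `0`. -/
def ext0 (v : Fin n → C) : Fin (n + 1) → C := Fin.cases 0 v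

@[simp] lemma ext0_zero (v : Fin n → C) : ext0 v 0 = 0 := rfl
@[simp] lemma ext0_succ (v : Fin n → C) (i : Fin n) : ext0 v i.succ = v i := rfl

lemma ip_ext0 (A : Matrix (Fin (n + 1)) (Fin (n + 1)) C) (v : Fin n → C) :
    ip S A (ext0 v) (ext0 v)
      = ∑ i, ∑ j, S.conj (v i) * A i.succ j.succ * v j := by
  unfold ip
  rw [Fin.sum_univ_succ]
  simp only [ext0_zero, map_zero, zero_mul, Finset.sum_const_zero, zero_add]
  refine Finset.sum_congr rfl fun i _ => ?_
  rw [Fin.sum_univ_succ]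
  simp

lemma ip_emb (A : Matrix (Fin n) (Fin n) C) (v : Fin n → C) :
    ip S (emb A) (ext0 v) (ext0 v) = ip S A v v := by
  rw [ip_ext0]
  simp [ip]

end Embedding

section Positivity
set_option linter.unusedSectionVars false
variable {C : Type*} [CommRing C] [Nontrivial C] (S : OrderedScalars C) {n : ℕ}

lemma OS.nonneg_sum {ι : Type*} (s : Finset ι) (f : ι → C)
    (hf : ∀ i ∈ s, S.nonneg (f i)) : S.nonneg (∑ i ∈ s, f i) :=
  Finset.sum_induction f S.nonneg (fun _ _ ha hb => OS.nonneg_add S ha hb)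
    (OS.nonneg_zero S) hf

lemma ctrans_one : ctrans S (1 : Matrix (Fin n) (Fin n) C) = 1 := by
  ext i j
  simp [ctrans, Matrix.one_apply, apply_ite S.conj, eq_comm]

lemma ctrans_add (M N : Matrix (Fin n) (Fin n) C) :
    ctrans S (M + N) = ctrans S M + ctrans S N := by
  ext i j; simp [ctrans]

lemma ctrans_sub (M N : Matrix (Fin n) (Fin n) C) :
    ctrans S (M - N) = ctrans S M - ctrans S N := by
  ext i j; simp [ctrans]

/-- a positive functional is real on Hermitian matrices. -/
lemma omega_real {h : C} (h_half : h + h = 1)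
    (A : Matrix (Fin n) (Fin n) C) (hA : ctrans S A = A)
    (ω : Matrix (Fin n) (Fin n) C →ₗ[C] C)
    (hω : ∀ B : Matrix (Fin n) (Fin n) C, S.nonneg (ω (ctrans S B * B))) :
    S.conj (ω A) = ω A := by
  have hP1 : ctrans S (1 + A) = 1 + A := by rw [ctrans_add, ctrans_one, hA]
  have hP2 : ctrans S (1 - A) = 1 - A := by rw [ctrans_sub, ctrans_one, hA]
  have key : ctrans S (1 + A) * (1 + A) - ctrans S (1 - A) * (1 - A) = A + A + A + A := by
    rw [hP1, hP2]; noncomm_ring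
  have hsum : ω (ctrans S (1 + A) * (1 + A)) - ω (ctrans S (1 - A) * (1 - A))
      = ω A + ω A + ω A + ω A := by
    rw [← map_sub, key, map_add, map_add, map_add]
  have r1 := OS.real_of_nonneg S (hω (1 + A))
  have r2 := OS.real_of_nonneg S (hω (1 - A))
  have hc : S.conj (ω A) + S.conj (ω A) + S.conj (ω A) + S.conj (ω A)
      = ω A + ω A + ω A + ω A := by
    have := congrArg S.conj hsum
    rw [map_sub, r1, r2, map_add, map_add, map_add] at this
    rw [← this, hsum]
  exact OS.four_cancel h_half hc

/-- positivity of `M ↦ ⟨v, M v⟩`. -/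
lemma ip_ctrans_mul (B : Matrix (Fin n) (Fin n) C) (v : Fin n → C) :
    ip S (ctrans S B * B) v v = ∑ k, S.conj (B.mulVec v k) * B.mulVec v k := by
  have hterm : ∀ i j : Fin n, S.conj (v i) * (ctrans S B * B) i j * v j
      = ∑ k, S.conj (B k i * v i) * (B k j * v j) := by
    intro i j
    rw [Matrix.mul_apply, Finset.mul_sum, Finset.sum_mul]
    refine Finset.sum_congr rfl fun k _ => ?_
    simp only [ctrans, map_mul]
    ring
  calc ip S (ctrans S B * B) v v
      = ∑ i, ∑ j, ∑ k, S.conj (B k i * v i) * (B k j * v j) :=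
        Finset.sum_congr rfl fun i _ => Finset.sum_congr rfl fun j _ => hterm i j
    _ = ∑ i, ∑ k, ∑ j, S.conj (B k i * v i) * (B k j * v j) :=
        Finset.sum_congr rfl fun i _ => Finset.sum_comm
    _ = ∑ k, ∑ i, ∑ j, S.conj (B k i * v i) * (B k j * v j) := Finset.sum_comm
    _ = ∑ k, S.conj (B.mulVec v k) * B.mulVec v k := by
        refine Finset.sum_congr rfl fun k _ => ?_
        simp [Matrix.mulVec, dotProduct, map_sum, Finset.sum_mul_sum]

/-- `M ↦ ⟨v, M v⟩` as a linear map. -/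
def vecF (v : Fin n → C) : Matrix (Fin n) (Fin n) C →ₗ[C] C where
  toFun M := ip S M v v
  map_add' M N := by
    unfold ip
    rw [← Finset.sum_add_distrib]
    refine Finset.sum_congr rfl fun i _ => ?_
    rw [← Finset.sum_add_distrib]
    refine Finset.sum_congr rfl fun j _ => ?_
    simp [Matrix.add_apply]; ring
  map_smul' c M := by
    unfold ip
    simp only [RingHom.id_apply, smul_eq_mul, Finset.mul_sum]
    refine Finset.sum_congr rfl fun i _ => ?_
    refine Finset.sum_congr rfl fun j _ => ?_
    simp [Matrix.smul_apply, smul_eq_mul]; ring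

@[simp] lemma vecF_apply (v : Fin n → C) (M : Matrix (Fin n) (Fin n) C) :
    vecF S v M = ip S M v v := rfl

end Positivity

section Main
set_option linter.unusedSectionVars false
set_option maxHeartbeats 1000000
variable {C : Type*} [CommRing C] [Nontrivial C] (S : OrderedScalars C)

lemma main_induction {h : C} (h_half : h + h = 1) :
    ∀ (n : ℕ) (A : Matrix (Fin n) (Fin n) C), ctrans S A = A →
      (∀ v : Fin n → C, S.nonneg (ip S A v v)) →
      ∀ ω : Matrix (Fin n) (Fin n) C →ₗ[C] C,
        (∀ B : Matrix (Fin n) (Fin n) C, S.nonneg (ω (ctrans S B * B))) →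
        S.nonneg (ω A) := by
  intro n
  induction n with
  | zero =>
    intro A hA hq ω hω
    have hA0 : A = 0 := by ext i j; exact i.elim0
    rw [hA0, map_zero]
    exact OS.nonneg_zero S
  | succ n IH =>
    intro A hA hq ω hω
    have hωreal : S.conj (ω A) = ω A := omega_real S h_half A hA ω hω
    have hω' : ∀ B : Matrix (Fin n) (Fin n) C,
        S.nonneg ((ω.comp (embL : Matrix (Fin n) (Fin n) C →ₗ[C] _)) (ctrans S B * B)) := by
      intro B
      have he : (ω.comp (embL : Matrix (Fin n) (Fin n) C →ₗ[C] _)) (ctrans S B * B)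
          = ω (ctrans S (emb B) * emb B) := by
        rw [LinearMap.comp_apply, embL_apply, emb_mul, ctrans_emb]
      rw [he]
      exact hω (emb B)
    have ha_real : S.conj (A 0 0) = A 0 0 := ctrans_apply S A hA 0 0
    have ha_nonneg : S.nonneg (A 0 0) := by
      have := hq (Pi.single 0 1)
      rwa [ip_single_single] at this
    rcases ha_nonneg with haP | ha0
    · -- pivot case `A 0 0 ∈ P`
      set a := A 0 0 with ha_def
      set B' : Matrix (Fin n) (Fin n) C :=
        fun i j => a * A i.succ j.succ - A i.succ 0 * S.conj (A j.succ 0) with hB'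
      have hermB' : ctrans S B' = B' := by
        ext i j
        show S.conj (B' j i) = B' i j
        simp only [hB', map_sub, map_mul, ha_real, S.conj_conj,
          ctrans_apply S A hA j.succ i.succ]
        ring
      have hqB' : ∀ v' : Fin n → C, S.nonneg (ip S B' v' v') := by
        intro v'
        set v : Fin (n + 1) → C := ext0 v' with hv
        set s : C := ip S A (Pi.single 0 1) v with hs_def
        have hs_sum : s = ∑ j, S.conj (A j.succ 0) * v' j := by
          rw [hs_def, ip_single_left, Fin.sum_univ_succ]
          simp only [hv, ext0_zero, mul_zero, zero_add]
          refine Finset.sum_congr rfl fun j _ => ?_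
          rw [← ctrans_apply S A hA j.succ 0, ext0_succ]
        have hcs_sum : S.conj s = ∑ i, A i.succ 0 * S.conj (v' i) := by
          rw [hs_sum, map_sum]
          refine Finset.sum_congr rfl fun i _ => ?_
          rw [map_mul, S.conj_conj]
        have hid : ip S B' v' v' = a * ip S A v v - S.conj s * s := by
          rw [hcs_sum, hs_sum, hv, ip_ext0, Finset.sum_mul_sum, Finset.mul_sum,
            ← Finset.sum_sub_distrib]
          unfold ip
          refine Finset.sum_congr rfl fun i _ => ?_
          rw [Finset.mul_sum, ← Finset.sum_sub_distrib]
          refine Finset.sum_congr rfl fun j _ => ?_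
          simp only [hB']
          ring
        have hvs : ip S A v (Pi.single 0 1) = S.conj s := by
          rw [hs_def]
          exact (ip_conj S A hA (Pi.single 0 1) v).symm
        have hcs : ip S A (a • v - s • (Pi.single 0 1 : Fin (n + 1) → C)) (a • v - s • (Pi.single 0 1 : Fin (n + 1) → C))
            = a * (a * ip S A v v - S.conj s * s) := by
          simp only [ip_sub_left, ip_sub_right, ip_smul_left, ip_smul_right,
            ip_single_single, hvs, ← hs_def, ← ha_def, ha_real]
          ring
        have hnn : S.nonneg (a * ip S B' v' v') := by
          rw [hid, ← hcs]
          exact hq _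
        exact OS.cancel S haP (ip_conj S B' hermB' v' v') hnn
      -- the rank-one part as `ctrans X * X`
      set X : Matrix (Fin (n + 1)) (Fin (n + 1)) C :=
        Matrix.of (fun i j => if i = (0 : Fin (n + 1)) then S.conj (A j 0) else 0) with hX
      have hXentry : ∀ i j : Fin (n + 1), (ctrans S X * X) i j = A i 0 * S.conj (A j 0) := by
        intro i j
        rw [Matrix.mul_apply, Fin.sum_univ_succ]
        have h0 : ctrans S X i 0 * X 0 j = A i 0 * S.conj (A j 0) := by
          show S.conj (X 0 i) * X 0 j = _
          simp [hX, Matrix.of_apply, S.conj_conj]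
        have hsucc : ∀ k : Fin n, ctrans S X i k.succ * X k.succ j = 0 := by
          intro k
          show S.conj (X k.succ i) * X k.succ j = 0
          have hz : X k.succ j = 0 := by simp [hX, Matrix.of_apply, Fin.succ_ne_zero]
          rw [hz, mul_zero]
        rw [h0, Finset.sum_congr rfl (fun k _ => hsucc k), Finset.sum_const_zero, add_zero]
      have hdecomp : a • A = ctrans S X * X + emb B' := by
        ext i j
        rw [Matrix.add_apply, hXentry, Matrix.smul_apply, smul_eq_mul]
        induction i using Fin.cases with
        | zero =>
          induction j using Fin.cases with
          | zero => rw [emb_zero_left, add_zero, ← ha_def, ha_real]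
          | succ j => rw [emb_zero_left, add_zero, ctrans_apply S A hA j.succ 0, ← ha_def]
        | succ i =>
          induction j using Fin.cases with
          | zero =>
            rw [emb_succ_zero, add_zero, ← ha_def, ha_real]
            ring
          | succ j =>
            rw [emb_succ_succ]
            simp only [hB']
            ring
      have hωA : a * ω A = ω (ctrans S X * X) + ω (emb B') := by
        have hc := congrArg ω hdecomp
        rwa [map_smul, smul_eq_mul, map_add] at hc
      have h2 := IH B' hermB' hqB' (ω.comp embL) hω'
      simp only [LinearMap.comp_apply, embL_apply] at h2
      refine OS.cancel S haP hωreal ?_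
      rw [hωA]
      exact OS.nonneg_add S (hω X) h2
    · -- case `A 0 0 = 0` : the first row and column vanish
      have hrow : ∀ l : Fin (n + 1), A 0 l = 0 := by
        intro l
        have ht_real : S.conj (A l l) = A l l := ctrans_apply S A hA l l
        have ht_nonneg : S.nonneg (A l l) := by
          have := hq (Pi.single l 1)
          rwa [ip_single_single] at this
        have hv := hq ((-((A l l + 1) * A 0 l)) • (Pi.single 0 1 : Fin (n + 1) → C)
          + (S.conj (A 0 l) * A 0 l) • (Pi.single l 1 : Fin (n + 1) → C))
        have hval : ip S A ((-((A l l + 1) * A 0 l)) • (Pi.single 0 1 : Fin (n + 1) → C)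
              + (S.conj (A 0 l) * A 0 l) • (Pi.single l 1 : Fin (n + 1) → C))
            ((-((A l l + 1) * A 0 l)) • (Pi.single 0 1 : Fin (n + 1) → C)
              + (S.conj (A 0 l) * A 0 l) • (Pi.single l 1 : Fin (n + 1) → C))
            = -((S.conj (A 0 l) * A 0 l) * (S.conj (A 0 l) * A 0 l) * (A l l + 1 + 1)) := by
          simp only [ip_add_left, ip_add_right, ip_smul_left, ip_smul_right,
            ip_single_single, map_neg, map_mul, map_add, map_one, ht_real, S.conj_conj, ha0]
          rw [← ctrans_apply S A hA 0 l]
          ring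
        rw [hval] at hv
        have hnsq : S.nonneg (S.conj (A 0 l) * A 0 l) := OS.normSq_nonneg S _
        have ht2 : S.nonneg (A l l + 1 + 1) :=
          OS.nonneg_add S (OS.nonneg_add S ht_nonneg (Or.inl (OS.one_mem S)))
            (Or.inl (OS.one_mem S))
        have h2 : S.nonneg ((S.conj (A 0 l) * A 0 l) * (S.conj (A 0 l) * A 0 l)
            * (A l l + 1 + 1)) :=
          OS.nonneg_mul S (OS.nonneg_mul S hnsq hnsq) ht2
        have h3 := OS.nonneg_antisymm S h2 hv
        have hP2 : (A l l + 1 + 1) ∈ S.P :=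
          S.P_add _ (OS.add_one_mem S ht_nonneg) 1 (OS.one_mem S)
        have h4 : (S.conj (A 0 l) * A 0 l) * (S.conj (A 0 l) * A 0 l) = 0 :=
          OS.mul_eq_zero_of S hP2 (OS.nonneg_mul S hnsq hnsq) (by linear_combination h3)
        have h5 : S.conj (A 0 l) * A 0 l = 0 :=
          OS.sq_eq_zero S (OS.normSq_real S _) h4
        exact OS.normSq_eq_zero S h5
      have hcol : ∀ i : Fin n, A i.succ 0 = 0 := fun i => by
        rw [← ctrans_apply S A hA 0 i.succ, hrow, map_zero]
      set A' : Matrix (Fin n) (Fin n) C := Matrix.of (fun i j => A i.succ j.succ) with hA'_def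
      have hAemb : A = emb A' := by
        ext i j
        induction i using Fin.cases with
        | zero => rw [emb_zero_left]; exact hrow j
        | succ i =>
          induction j using Fin.cases with
          | zero => rw [emb_zero_right]; exact hcol i
          | succ j => rw [emb_succ_succ, hA'_def]; rfl
      have hermA' : ctrans S A' = A' := by
        ext i j
        show S.conj (A' j i) = A' i j
        simp only [hA'_def, Matrix.of_apply]
        exact ctrans_apply S A hA j.succ i.succ
      have hqA' : ∀ v : Fin n → C, S.nonneg (ip S A' v v) := by
        intro v
        have := hq (ext0 v)
        rwa [hAemb, ip_emb] at this
      have hfin := IH A' hermA' hqA' (ω.comp embL) hω'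
      simp only [LinearMap.comp_apply, embL_apply] at hfin
      rwa [hAemb]

end Main

/-- A Hermitian matrix `A ∈ Mₙ(C)`, `C = R(i)` with `1/2 ∈ R`, satisfies
`ω(A) ≥ 0` for every positive linear functional `ω` on `Mₙ(C)` iff `⟨v, A v⟩ ≥ 0` for all
`v ∈ Cⁿ`. -/
theorem hermitian_matrix_positive_iff
    {C : Type*} [CommRing C] [Nontrivial C] (S : OrderedScalars C)
    -- `1/2 ∈ R`
    (h : C) (h_real : S.conj h = h) (h_half : h + h = 1)
    {n : ℕ} (A : Matrix (Fin n) (Fin n) C) (hA : ctrans S A = A) :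
    (∀ ω : Matrix (Fin n) (Fin n) C →ₗ[C] C,
        (∀ B : Matrix (Fin n) (Fin n) C, S.nonneg (ω (ctrans S B * B))) → S.nonneg (ω A)) ↔
    (∀ v : Fin n → C, S.nonneg (∑ k, S.conj (v k) * A.mulVec v k)) := by
  constructor
  · intro hω v
    have h1 := hω (vecF S v) ?_
    · rwa [vecF_apply, ← ip_q_eq] at h1
    · intro B
      rw [vecF_apply, ip_ctrans_mul]
      exact OS.nonneg_sum S _ _ fun k _ => OS.normSq_nonneg S _
  · intro hv ω hω
    exact main_induction S h_half n A hA (fun v => by rw [← ip_q_eq]; exact hv v) ω hω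
end

section
/- Let A be a *-algebra over C = R(i) with 1/2 ∈ R. Then the n-th Hochschild cohomology decomposes R-linearly as H^n(A) ≅ H^n_H(A) ⊕ i·H^n_H(A), via [φ] ↦ [½(φ + φ*)] + i[(1/2i)(φ - φ*)], where H^n_H(A) is the Hermitian Hochschild cohomology. -/
/-- A `*`-algebra over `C = R(i)`: an associative unital `C`-algebra together with a
`C`-antilinear involutive anti-automorphism `st`. -/
structure StarAlgebraOn {C : Type*} [CommRing C] (S : OrderedScalars C)
    (A : Type*) [Ring A] [Algebra C A] where
  st : A → A
  st_add : ∀ x y : A, st (x + y) = st x + st y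
  st_mul : ∀ x y : A, st (x * y) = st y * st x
  st_st : ∀ x : A, st (st x) = x
  st_smul : ∀ (c : C) (x : A), st (c • x) = S.conj c • st x


/-- Hochschild `n`-cochains of the algebra `A` (with values in `A`). -/
def Cochain (A : Type*) (n : ℕ) := (Fin n → A) → A

/-- The Gerstenhaber product `φ ⋄ ψ` of an `n`-cochain `φ` and an `m`-cochain `ψ`:
`(φ ⋄ ψ)(A₁,…,A_{n+m-1}) = Σ_{i=1}^{n} (-1)^{(i-1)(m-1)} φ(A₁,…,A_{i-1}, ψ(Aᵢ,…,A_{i+m-1}), A_{i+m},…)`. -/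
def gerst {A : Type*} [Ring A] {n m : ℕ} (φ : Cochain A n) (ψ : Cochain A m) :
    Cochain A (n + m - 1) := fun a =>
  ∑ i : Fin n, ((-1 : ℤ) ^ ((i : ℕ) * (m - 1))) •
    φ (fun j : Fin n =>
      if hlt : (j : ℕ) < (i : ℕ) then
        a ⟨(j : ℕ), by have hj := j.isLt; have hi := i.isLt; omega⟩
      else if heq : (j : ℕ) = (i : ℕ) then
        ψ (fun k : Fin m =>
          a ⟨(i : ℕ) + (k : ℕ), by have hk := k.isLt; have hi := i.isLt; omega⟩)
      else
        a ⟨(j : ℕ) + m - 1, by have hj := j.isLt; omega⟩)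

/-- Identification of cochain spaces of equal arity. -/
def reindex {A : Type*} {n m : ℕ} (h : n = m) (φ : Cochain A n) : Cochain A m :=
  fun a => φ fun j => a (Fin.cast h j)

/-- The multiplication of `A` as a `2`-cochain `μ₀`. -/
def mul2 (A : Type*) [Ring A] : Cochain A 2 := fun a => a 0 * a 1

/-- The action of the `*`-involution on `n`-cochains:
`φ*(A₁ ⊗ ⋯ ⊗ Aₙ) = (φ(Aₙ* ⊗ ⋯ ⊗ A₁*))*`. -/
def stC {C : Type*} [CommRing C] {S : OrderedScalars C}
    {A : Type*} [Ring A] [Algebra C A] (T : StarAlgebraOn S A)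
    {n : ℕ} (φ : Cochain A n) : Cochain A n :=
  fun a => T.st (φ fun j => T.st (a j.rev))

/-- The Hochschild differential `δφ = (-1)^{n-1} [μ₀, φ]` of an `n`-cochain (`n = d + 1`),
where `[·,·]` is the Gerstenhaber bracket: `[μ₀, φ] = μ₀ ⋄ φ - (-1)^{(2-1)(n-1)} φ ⋄ μ₀`. -/
def hdelta {A : Type*} [Ring A] {d : ℕ} (φ : Cochain A (d + 1)) : Cochain A (d + 2) :=
  fun a => ((-1 : ℤ) ^ d) •
    (reindex (by omega) (gerst (mul2 A) φ) a -
      ((-1 : ℤ) ^ d) • reindex (by omega) (gerst φ (mul2 A)) a)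



section AuxHH

variable {C : Type*} [CommRing C] {S : OrderedScalars C}
    {A : Type*} [Ring A] [Algebra C A] (T : StarAlgebraOn S A)

/-- Explicit formula for the Hochschild differential. -/
private def hform {A : Type*} [Ring A] {d : ℕ} (ψ : Cochain A (d + 1)) : Cochain A (d + 2) :=
  fun a => ((-1 : ℤ) ^ d) • (ψ (fun j => a j.castSucc) * a (Fin.last (d + 1)))
    + a 0 * ψ (fun j => a j.succ)
    - ∑ i : Fin (d + 1), ((-1 : ℤ) ^ (i : ℕ)) •
        ψ (fun j => if (j : ℕ) < (i : ℕ) then a j.castSucc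
          else if (j : ℕ) = (i : ℕ) then a j.castSucc * a j.succ
          else a j.succ)

private theorem hdelta_eq {A : Type*} [Ring A] {d : ℕ} (ψ : Cochain A (d + 1)) :
    hdelta ψ = hform ψ := by
  have hzz : ((-1 : ℤ) ^ d) * ((-1 : ℤ) ^ d) = 1 := by
    rw [← pow_add]; exact Even.neg_one_pow ⟨d, rfl⟩
  funext a
  have psc : ∀ f g : Fin (d + 1) → A, (∀ j, f j = g j) → ψ f = ψ g :=
    fun f g hfg => congrArg ψ (funext hfg)
  show ((-1 : ℤ) ^ d) •
    ((gerst (mul2 A) ψ) (fun j => a (Fin.cast (by omega) j)) -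
      ((-1 : ℤ) ^ d) • (gerst ψ (mul2 A)) (fun j => a (Fin.cast (by omega) j))) = _
  rw [gerst, gerst, Fin.sum_univ_two]
  simp only [mul2, Fin.isValue, Fin.val_zero, Fin.val_one, Fin.cast_mk]
  norm_num [-zsmul_eq_mul]
  rw [hform, smul_sub, smul_add, smul_smul, smul_smul, hzz, one_smul, one_smul]
  refine congrArg₂ (· - ·) (congrArg₂ (· + ·) rfl ?_) (Finset.sum_congr rfl fun x _ => ?_)
  · exact congrArg (a 0 * ·) (psc _ _ fun k => congrArg a (Fin.ext (by simp [Nat.add_comm])))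
  · refine congrArg (((-1 : ℤ) ^ (x : ℕ)) • ·) (psc _ _ fun j => ?_)
    simp only [Fin.val_fin_lt]
    by_cases h1 : j < x
    · rw [dif_pos h1, if_pos h1]; rfl
    · rw [dif_neg h1, if_neg h1]
      by_cases h2 : (j : ℕ) = (x : ℕ)
      · rw [dif_pos h2, if_pos h2]
        exact congrArg₂ (· * ·) (congrArg a (Fin.ext (by simp [h2])))
          (congrArg a (Fin.ext (by simp [h2])))
      · rw [dif_neg h2, if_neg h2]; rfl

private def TstHom : A →+ A := AddMonoidHom.mk' T.st (T.st_add)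

private lemma Tst_zero : T.st 0 = 0 := map_zero (TstHom T)
private lemma Tst_sub (x y : A) : T.st (x - y) = T.st x - T.st y := map_sub (TstHom T) x y
private lemma Tst_zsmul (n : ℤ) (x : A) : T.st (n • x) = n • T.st x := map_zsmul (TstHom T) n x
private lemma Tst_sum {ι : Type*} (s : Finset ι) (f : ι → A) :
    T.st (∑ i ∈ s, f i) = ∑ i ∈ s, T.st (f i) := map_sum (TstHom T) f s

private lemma stC_stC {n : ℕ} (φ : Cochain A n) : stC T (stC T φ) = φ := by
  funext a
  show T.st (T.st (φ fun j => T.st (T.st (a j.rev.rev)))) = φ a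
  rw [T.st_st]
  exact congrArg φ (funext fun j => by rw [T.st_st, Fin.rev_rev])

private lemma stC_ptadd {n : ℕ} (φ ψ : Cochain A n) :
    stC T (fun a => φ a + ψ a) = fun a => stC T φ a + stC T ψ a :=
  funext fun a => T.st_add _ _

private lemma stC_ptsub {n : ℕ} (φ ψ : Cochain A n) :
    stC T (fun a => φ a - ψ a) = fun a => stC T φ a - stC T ψ a :=
  funext fun a => Tst_sub T _ _

private lemma stC_ptcsmul {n : ℕ} (c : C) (φ : Cochain A n) :
    stC T (fun a => c • φ a) = fun a => S.conj c • stC T φ a :=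
  funext fun a => T.st_smul c _

private lemma stC_ptzsmul {n : ℕ} (m : ℤ) (φ : Cochain A n) :
    stC T (fun a => m • φ a) = fun a => m • stC T φ a :=
  funext fun a => Tst_zsmul T m _

private theorem stC_hform {d : ℕ} (ψ : Cochain A (d + 1)) :
    stC T (hform ψ) = fun a => ((-1 : ℤ) ^ d) • hform (stC T ψ) a := by
  funext a
  set b : Fin (d + 2) → A := fun j => T.st (a j.rev) with hb
  show T.st (hform ψ b) = ((-1 : ℤ) ^ d) • hform (stC T ψ) a
  simp only [hform]
  rw [Tst_sub, T.st_add, Tst_zsmul, T.st_mul, T.st_mul, Tst_sum]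
  simp only [Tst_zsmul]
  have hzz : ((-1 : ℤ) ^ d) * ((-1 : ℤ) ^ d) = 1 := by
    rw [← pow_add]; exact Even.neg_one_pow ⟨d, rfl⟩
  have e1 : T.st (b (Fin.last (d + 1))) = a 0 := by
    show T.st (T.st (a (Fin.last (d + 1)).rev)) = a 0
    rw [T.st_st, Fin.rev_last]
  have e2 : T.st (b 0) = a (Fin.last (d + 1)) := by
    show T.st (T.st (a (0 : Fin (d + 2)).rev)) = a (Fin.last (d + 1))
    rw [T.st_st, Fin.rev_zero]
  have e3 : T.st (ψ fun j => b j.castSucc) = stC T ψ (fun j => a j.succ) := by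
    show T.st (ψ fun j => T.st (a j.castSucc.rev)) = T.st (ψ fun j => T.st (a j.rev.succ))
    simp only [Fin.rev_castSucc]
  have e4 : T.st (ψ fun j => b j.succ) = stC T ψ (fun j => a j.castSucc) := by
    show T.st (ψ fun j => T.st (a j.succ.rev)) = T.st (ψ fun j => T.st (a j.rev.castSucc))
    simp only [Fin.rev_succ]
  have hpow : ∀ i : Fin (d + 1), ((-1 : ℤ) ^ (i : ℕ)) = (-1) ^ d * (-1) ^ ((i.rev : ℕ)) := by
    intro i
    have hi : (i.rev : ℕ) = d - (i : ℕ) := by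
      rw [Fin.val_rev]; omega
    rw [hi]
    calc ((-1 : ℤ) ^ (i : ℕ)) = ((-1) ^ (i : ℕ) * (-1) ^ (d - (i : ℕ))) * (-1) ^ (d - (i : ℕ)) := by
          rw [mul_assoc, ← pow_add, Even.neg_one_pow ⟨d - (i : ℕ), rfl⟩, mul_one]
      _ = (-1) ^ d * (-1) ^ (d - (i : ℕ)) := by
          rw [← pow_add]; congr 2; have := i.isLt; omega
  have key : ∀ i : Fin (d + 1),
      T.st (ψ fun j => if (j : ℕ) < (i : ℕ) then b j.castSucc
        else if (j : ℕ) = (i : ℕ) then b j.castSucc * b j.succ else b j.succ) =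
      stC T ψ (fun j => if (j : ℕ) < ((i.rev : Fin (d + 1)) : ℕ) then a j.castSucc
        else if (j : ℕ) = ((i.rev : Fin (d + 1)) : ℕ) then a j.castSucc * a j.succ
        else a j.succ) := by
    intro i
    refine congrArg T.st (congrArg ψ (funext fun j => ?_))
    beta_reduce
    have hjr : (j.rev : ℕ) = d - (j : ℕ) := by rw [Fin.val_rev]; omega
    have hir : (i.rev : ℕ) = d - (i : ℕ) := by rw [Fin.val_rev]; omega
    have hjlt := j.isLt
    have hilt := i.isLt
    by_cases h1 : (j : ℕ) < (i : ℕ)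
    · rw [if_pos h1]
      have c1 : ¬ ((j.rev : ℕ) < (i.rev : ℕ)) := by omega
      have c2 : ¬ ((j.rev : ℕ) = (i.rev : ℕ)) := by omega
      rw [if_neg c1, if_neg c2]
      show T.st (a j.castSucc.rev) = T.st (a j.rev.succ)
      rw [Fin.rev_castSucc]
    · by_cases h2 : (j : ℕ) = (i : ℕ)
      · rw [if_neg h1, if_pos h2]
        have c2 : ((j.rev : ℕ) = (i.rev : ℕ)) := by omega
        have c1 : ¬ ((j.rev : ℕ) < (i.rev : ℕ)) := by omega
        rw [if_neg c1, if_pos c2]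
        show T.st (a j.castSucc.rev) * T.st (a j.succ.rev) =
          T.st (a j.rev.castSucc * a j.rev.succ)
        rw [T.st_mul, Fin.rev_castSucc, Fin.rev_succ]
      · rw [if_neg h1, if_neg h2]
        have c1 : ((j.rev : ℕ) < (i.rev : ℕ)) := by omega
        rw [if_pos c1]
        show T.st (a j.succ.rev) = T.st (a j.rev.castSucc)
        rw [Fin.rev_succ]
  have esum : (∑ i : Fin (d + 1), (-1 : ℤ) ^ (i : ℕ) •
        T.st (ψ fun j => if (j : ℕ) < (i : ℕ) then b j.castSucc
          else if (j : ℕ) = (i : ℕ) then b j.castSucc * b j.succ else b j.succ)) =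
      ((-1 : ℤ) ^ d) • ∑ i : Fin (d + 1), (-1 : ℤ) ^ (i : ℕ) •
        stC T ψ (fun j => if (j : ℕ) < (i : ℕ) then a j.castSucc
          else if (j : ℕ) = (i : ℕ) then a j.castSucc * a j.succ else a j.succ) := by
    rw [Finset.smul_sum]
    refine Fintype.sum_equiv Fin.revPerm _ _ fun i => ?_
    rw [key i, hpow i, mul_smul]
    rfl
  rw [e1, e2, e3, e4, esum, smul_sub, smul_add, smul_smul, hzz, one_smul]
  abel

private lemma hform_ptadd {d : ℕ} (ψ₁ ψ₂ : Cochain A (d + 1)) :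
    hform (fun a => ψ₁ a + ψ₂ a) = fun a => hform ψ₁ a + hform ψ₂ a := by
  funext a
  simp only [hform, smul_add, add_mul, mul_add, Finset.sum_add_distrib]
  abel

private lemma hform_ptsub {d : ℕ} (ψ₁ ψ₂ : Cochain A (d + 1)) :
    hform (fun a => ψ₁ a - ψ₂ a) = fun a => hform ψ₁ a - hform ψ₂ a := by
  funext a
  simp only [hform, smul_sub, sub_mul, mul_sub, Finset.sum_sub_distrib]
  abel

private lemma hform_ptcsmul {d : ℕ} (c : C) (ψ : Cochain A (d + 1)) :
    hform (fun a => c • ψ a) = fun a => c • hform ψ a := by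
  funext a
  have hc : ∀ (n : ℤ) (x : A), n • (c • x) = c • (n • x) := fun n x => smul_comm n c x
  simp only [hform, smul_mul_assoc, mul_smul_comm, hc, ← Finset.smul_sum, ← smul_add, ← smul_sub]

private lemma hform_ptzsmul {d : ℕ} (m : ℤ) (ψ : Cochain A (d + 1)) :
    hform (fun a => m • ψ a) = fun a => m • hform ψ a := by
  funext a
  have hc : ∀ (n : ℤ) (x : A), n • (m • x) = m • (n • x) := fun n x => smul_comm n m x
  simp only [hform, smul_mul_assoc, mul_smul_comm, hc, ← Finset.smul_sum, ← smul_add, ← smul_sub]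

private lemma hdelta_ptadd {d : ℕ} (ψ₁ ψ₂ : Cochain A (d + 1)) :
    hdelta (fun a => ψ₁ a + ψ₂ a) = fun a => hdelta ψ₁ a + hdelta ψ₂ a := by
  simp only [hdelta_eq]; exact (hdelta_eq _).trans (hform_ptadd ψ₁ ψ₂)

private lemma hdelta_ptsub {d : ℕ} (ψ₁ ψ₂ : Cochain A (d + 1)) :
    hdelta (fun a => ψ₁ a - ψ₂ a) = fun a => hdelta ψ₁ a - hdelta ψ₂ a := by
  simp only [hdelta_eq]; exact (hdelta_eq _).trans (hform_ptsub ψ₁ ψ₂)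

private lemma hdelta_ptcsmul {d : ℕ} (c : C) (ψ : Cochain A (d + 1)) :
    hdelta (fun a => c • ψ a) = fun a => c • hdelta ψ a := by
  simp only [hdelta_eq]; exact (hdelta_eq _).trans (hform_ptcsmul c ψ)

private lemma hdelta_ptzsmul {d : ℕ} (m : ℤ) (ψ : Cochain A (d + 1)) :
    hdelta (fun a => m • ψ a) = fun a => m • hdelta ψ a := by
  simp only [hdelta_eq]; exact (hdelta_eq _).trans (hform_ptzsmul m ψ)

private theorem stC_hdelta {d : ℕ} (ψ : Cochain A (d + 1)) :
    stC T (hdelta ψ) = fun a => ((-1 : ℤ) ^ d) • hdelta (stC T ψ) a := by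
  simp only [hdelta_eq]; exact stC_hform T ψ

private lemma neg_one_pow_smul_cancel {M : Type*} [AddCommGroup M] {e : ℕ} {x : M}
    (hx : ((-1 : ℤ) ^ e) • x = 0) : x = 0 := by
  have h2 : ((-1 : ℤ) ^ e) * ((-1 : ℤ) ^ e) = 1 := by
    rw [← pow_add]; exact Even.neg_one_pow ⟨e, rfl⟩
  calc x = (((-1 : ℤ) ^ e) * ((-1 : ℤ) ^ e)) • x := by rw [h2, one_smul]
    _ = ((-1 : ℤ) ^ e) • (((-1 : ℤ) ^ e) • x) := mul_smul _ _ _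
    _ = 0 := by rw [hx, smul_zero]

end AuxHH

/-- With `1/2 ∈ R`, the Hochschild cohomology of a `*`-algebra `A`
decomposes `R`-linearly as `Hⁿ(A) ≅ Hⁿ_H(A) ⊕ i·Hⁿ_H(A)` via
`[φ] ↦ [½(φ + φ*)] + i [(1/2i)(φ - φ*)]`.  Concretely (degree `n = d + 2`): the Hermitian
part `½(φ + φ*)` and the part `(1/2i)(φ - φ*)` of a cocycle `φ` are Hermitian cocycles,
`φ` is recovered from them, and `φ` is a coboundary iff both parts are Hermitian
coboundaries (in the sense of `B^n_H`: `δψ` with `ψ` Hermitian for `n` even,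
anti-Hermitian for `n` odd). -/
theorem hermitian_hochschild_cohomology_decomposition
    {C : Type*} [CommRing C] (S : OrderedScalars C)
    {A : Type*} [Ring A] [Algebra C A] (T : StarAlgebraOn S A)
    -- `1/2 ∈ R`
    (h : C) (h_real : S.conj h = h) (h_half : h + h = 1)
    {d : ℕ} (φ : Cochain A (d + 2)) :
    -- the Hermitian part `½(φ + φ*)`
    let hermP : Cochain A (d + 2) := fun a => h • (φ a + stC T φ a)
    -- the part `(1/(2i))(φ - φ*)` (note `1/(2i) = -i/2`)
    let antiP : Cochain A (d + 2) := fun a => (-S.i * h) • (φ a - stC T φ a)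
    -- Hermitian coboundaries `B^{d+2}_H`
    let IsHB : Cochain A (d + 2) → Prop := fun χ =>
      ∃ ψ : Cochain A (d + 1),
        (if Even (d + 2) then stC T ψ = ψ else stC T ψ = fun a => -ψ a) ∧
        χ = hdelta ψ
    (stC T hermP = hermP ∧ stC T antiP = antiP) ∧
    (φ = fun a => hermP a + S.i • antiP a) ∧
    (hdelta φ = (fun _ => (0 : A)) →
        hdelta hermP = (fun _ => (0 : A)) ∧ hdelta antiP = (fun _ => (0 : A))) ∧
    ((∃ ψ : Cochain A (d + 1), φ = hdelta ψ) ↔ (IsHB hermP ∧ IsHB antiP)) := by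
  intro hermP antiP IsHB
  have hconj_anti : S.conj (-S.i * h) = S.i * h := by
    rw [map_mul, map_neg, S.conj_i, h_real]; ring
  have herm1 : stC T hermP = hermP := by
    show stC T (fun a => h • (φ a + stC T φ a)) = fun a => h • (φ a + stC T φ a)
    erw [stC_ptcsmul, stC_ptadd, stC_stC, h_real]
    funext a; rw [add_comm (φ a)]
  have herm2 : stC T antiP = antiP := by
    show stC T (fun a => (-S.i * h) • (φ a - stC T φ a)) =
      fun a => (-S.i * h) • (φ a - stC T φ a)
    erw [stC_ptcsmul, stC_ptsub, stC_stC, hconj_anti]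
    funext a
    rw [neg_mul, neg_smul, ← smul_neg, neg_sub]
  have hrecover : φ = fun a => hermP a + S.i • antiP a := by
    show φ = fun a => h • (φ a + stC T φ a) + S.i • ((-S.i * h) • (φ a - stC T φ a))
    have hsc : S.i * (-S.i * h) = h := by linear_combination (-h) * S.i_mul_i
    funext a
    rw [smul_smul, hsc, smul_add, smul_sub]
    have hkey : (h • φ a + h • stC T φ a) + (h • φ a - h • stC T φ a) = (h + h) • φ a := by
      rw [add_smul]; abel
    rw [hkey, h_half, one_smul]
  refine ⟨⟨herm1, herm2⟩, hrecover, ?_, ?_⟩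
  · intro hz
    have hstz : hdelta (stC T φ) = fun _ => (0 : A) := by
      have h1 := stC_hdelta T (d := d + 1) φ
      rw [hz] at h1
      have h2 : stC T (fun _ : Fin (d + 3) → A => (0 : A)) = fun _ => (0 : A) :=
        funext fun a => Tst_zero T
      rw [h2] at h1
      funext a
      exact neg_one_pow_smul_cancel (congrFun h1 a).symm
    constructor
    · show hdelta (fun a => h • (φ a + stC T φ a)) = fun _ => 0
      erw [hdelta_ptcsmul, hdelta_ptadd, hz, hstz]
      funext a; simp
    · show hdelta (fun a => (-S.i * h) • (φ a - stC T φ a)) = fun _ => 0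
      erw [hdelta_ptcsmul, hdelta_ptsub, hz, hstz]
      funext a; simp
  · have hpar : Even (d + 2) ↔ Even d := by
      rw [Nat.even_iff, Nat.even_iff]; omega
    constructor
    · rintro ⟨ψ, hφ⟩
      subst hφ
      refine ⟨⟨fun a => h • (ψ a + ((-1 : ℤ) ^ d) • stC T ψ a), ?_, ?_⟩,
        ⟨fun a => (-S.i * h) • (ψ a - ((-1 : ℤ) ^ d) • stC T ψ a), ?_, ?_⟩⟩
      · rcases Nat.even_or_odd d with he | ho
        · rw [if_pos (hpar.mpr he), Even.neg_one_pow he]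
          erw [stC_ptcsmul, stC_ptadd, stC_ptzsmul, stC_stC, h_real]
          funext a
          simp only [one_smul, neg_smul, smul_neg, smul_sub, smul_add, neg_neg, neg_mul]
          abel
        · rw [if_neg (fun hc => (Nat.not_odd_iff_even.mpr (hpar.mp hc)) ho), Odd.neg_one_pow ho]
          erw [stC_ptcsmul, stC_ptadd, stC_ptzsmul, stC_stC, h_real]
          funext a
          simp only [one_smul, neg_smul, smul_neg, smul_sub, smul_add, neg_neg, neg_mul]
          abel
      · show (fun a => h • (hdelta ψ a + stC T (hdelta ψ) a)) = _
        have e1 := hdelta_ptcsmul h (fun a => ψ a + ((-1 : ℤ) ^ d) • stC T ψ a)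
        have e2 := hdelta_ptadd ψ (fun a => ((-1 : ℤ) ^ d) • stC T ψ a)
        have e3 := hdelta_ptzsmul ((-1 : ℤ) ^ d) (stC T ψ)
        beta_reduce at e1 e2 e3
        rw [stC_hdelta, e1, e2, e3]
      · rcases Nat.even_or_odd d with he | ho
        · rw [if_pos (hpar.mpr he), Even.neg_one_pow he]
          erw [stC_ptcsmul, stC_ptsub, stC_ptzsmul, stC_stC, hconj_anti]
          funext a
          simp only [one_smul, neg_smul, smul_neg, smul_sub, smul_add, neg_neg, neg_mul]
          abel
        · rw [if_neg (fun hc => (Nat.not_odd_iff_even.mpr (hpar.mp hc)) ho), Odd.neg_one_pow ho]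
          erw [stC_ptcsmul, stC_ptsub, stC_ptzsmul, stC_stC, hconj_anti]
          funext a
          simp only [one_smul, neg_smul, smul_neg, smul_sub, smul_add, neg_neg, neg_mul]
          abel
      · show (fun a => (-S.i * h) • (hdelta ψ a - stC T (hdelta ψ) a)) = _
        have e1 := hdelta_ptcsmul (-S.i * h) (fun a => ψ a - ((-1 : ℤ) ^ d) • stC T ψ a)
        have e2 := hdelta_ptsub ψ (fun a => ((-1 : ℤ) ^ d) • stC T ψ a)
        have e3 := hdelta_ptzsmul ((-1 : ℤ) ^ d) (stC T ψ)
        beta_reduce at e1 e2 e3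
        rw [stC_hdelta, e1, e2, e3]
    · rintro ⟨⟨ψ₁, -, h1⟩, ⟨ψ₂, -, h2⟩⟩
      refine ⟨fun a => ψ₁ a + S.i • ψ₂ a, ?_⟩
      have e1 := hdelta_ptadd ψ₁ (fun a => S.i • ψ₂ a)
      have e2 := hdelta_ptcsmul S.i ψ₂
      beta_reduce at e1 e2
      rw [hrecover, h1, h2, e1, e2]
end
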